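/- Tautology criterion for symmetric invariant DNFs built from two levels: Let n ≥ 2 and 1 ≤ k < k' ≤ n, and let D consist of all all-positive cubes of length k and all all-negative cubes of length k'. Then D is a distinct DNF, and D is a tautology if and only if k + k' ≤ n + 1. -/

import Mathlib

/-! An assignment with `t` true values satisfies some all-positive `k`-cube iff `k ≤ t`, and some
all-negative `k'`-cube iff `k' ≤ n - t`. Hence the only assignments that can escape the DNF are those
with `t < k` and `n - t < k'`; the extreme one, `t = k - 1`, escapes exactly when `k + k' > n + 1`.
Distinctness holds because cubes of the two levels have different sizes. -/

abbrev Cube (n : ℕ) := Finset (Fin n) × (Fin n → Bool)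

def Sat {n : ℕ} (a : Fin n → Bool) (c : Cube n) : Prop :=
  ∀ i ∈ c.1, a i = c.2 i

def DistinctDNF {n : ℕ} (D : Finset (Cube n)) : Prop :=
  ∀ c ∈ D, ∀ c' ∈ D, c.1 = c'.1 → c = c'

def Tauto {n : ℕ} (D : Finset (Cube n)) : Prop :=
  ∀ a : Fin n → Bool, ∃ c ∈ D, Sat a c

open Finset

def constCubes (n k : ℕ) (b : Bool) : Finset (Cube n) :=
  (univ.powersetCard k).image fun S => (S, fun _ => b)

section

variable {n k k' : ℕ}

theorem mem_constCubes {b : Bool} {c : Cube n} :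
    c ∈ constCubes n k b ↔ #c.1 = k ∧ c.2 = fun _ => b := by
  obtain ⟨S, f⟩ := c
  simp only [constCubes, mem_image, mem_powersetCard, subset_univ, true_and, Prod.mk.injEq]
  constructor
  · rintro ⟨S, hS, rfl, rfl⟩
    exact ⟨hS, rfl⟩
  · rintro ⟨hS, rfl⟩
    exact ⟨S, hS, rfl, rfl⟩

theorem sat_const_iff (a : Fin n → Bool) (S : Finset (Fin n)) (b : Bool) :
    Sat a (S, fun _ => b) ↔ S ⊆ ({i | a i = b} : Finset (Fin n)) := by
  simp [Sat, subset_iff]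

theorem exists_mem_constCubes_sat_iff (a : Fin n → Bool) (b : Bool) :
    (∃ c ∈ constCubes n k b, Sat a c) ↔ k ≤ #{i | a i = b} := by
  simp only [constCubes, exists_mem_image, mem_powersetCard, subset_univ, true_and, sat_const_iff]
  constructor
  · rintro ⟨S, rfl, hS⟩
    exact card_le_card hS
  · intro h
    obtain ⟨S, hS, rfl⟩ := exists_subset_card_eq h
    exact ⟨S, rfl, hS⟩

theorem distinctDNF_constCubes_union (h : k ≠ k') (b b' : Bool) :
    DistinctDNF (constCubes n k b ∪ constCubes n k' b') := by
  rintro ⟨S, f⟩ hc ⟨S', f'⟩ hc' (rfl : S = S')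
  simp only [mem_union, mem_constCubes] at hc hc'
  rcases hc with ⟨hS, rfl⟩ | ⟨hS, rfl⟩ <;> rcases hc' with ⟨hS', rfl⟩ | ⟨hS', rfl⟩ <;>
    first | rfl | omega

theorem card_true_add_card_false (a : Fin n → Bool) :
    #{i | a i = true} + #{i | a i = false} = n := by
  simpa using card_filter_add_card_filter_not (s := univ) (fun i => a i = true)

theorem exists_card_true_eq {m : ℕ} (h : m ≤ n) : ∃ a : Fin n → Bool, #{i | a i = true} = m := by
  obtain ⟨S, -, hS⟩ := exists_subset_card_eq (s := (univ : Finset (Fin n))) (by simpa using h)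
  exact ⟨fun i => decide (i ∈ S), by simpa using hS⟩

theorem tauto_constCubes_union_iff (hk : k ≤ n + 1) (hk' : k' ≤ n + 1) :
    Tauto (constCubes n k true ∪ constCubes n k' false) ↔ k + k' ≤ n + 1 := by
  have hcover : Tauto (constCubes n k true ∪ constCubes n k' false) ↔
      ∀ a : Fin n → Bool, k ≤ #{i | a i = true} ∨ k' ≤ #{i | a i = false} := by
    simp only [Tauto, mem_union, or_and_right, exists_or, exists_mem_constCubes_sat_iff]
  rw [hcover]
  constructor
  · intro hT
    by_contra hlt
    obtain ⟨a, ha⟩ := exists_card_true_eq (n := n) (m := k - 1) (by omega)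
    have := card_true_add_card_false a
    rcases hT a with h | h <;> omega
  · intro hle a
    have := card_true_add_card_false a
    omega

end

theorem stmt18_general (n k k' : ℕ) (hkk : k < k') (hk' : k' ≤ n) :
    DistinctDNF
      ((Finset.univ.powersetCard k).image (fun S : Finset (Fin n) => (S, fun _ => true)) ∪
       (Finset.univ.powersetCard k').image (fun S : Finset (Fin n) => (S, fun _ => false))) ∧
    (Tauto
      ((Finset.univ.powersetCard k).image (fun S : Finset (Fin n) => (S, fun _ => true)) ∪
       (Finset.univ.powersetCard k').image (fun S : Finset (Fin n) => (S, fun _ => false)))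
      ↔ k + k' ≤ n + 1) :=
  ⟨distinctDNF_constCubes_union hkk.ne true false,
    tauto_constCubes_union_iff (by omega) (by omega)⟩

theorem stmt18 (n k k' : ℕ) (hn : 2 ≤ n) (hk : 1 ≤ k) (hkk : k < k') (hk' : k' ≤ n) :
    DistinctDNF
      ((Finset.univ.powersetCard k).image (fun S : Finset (Fin n) => (S, fun _ => true)) ∪
       (Finset.univ.powersetCard k').image (fun S : Finset (Fin n) => (S, fun _ => false))) ∧
    (Tauto
      ((Finset.univ.powersetCard k).image (fun S : Finset (Fin n) => (S, fun _ => true)) ∪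
       (Finset.univ.powersetCard k').image (fun S : Finset (Fin n) => (S, fun _ => false)))
      ↔ k + k' ≤ n + 1) :=
  stmt18_general n k k' hkk hk'
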